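/- Consider the robust shortest path problem min_{x∈X} max_{δ∈U_S} Σ_{a∈A} δ_a f̂_a x_a, where X ⊆ [0,1]^A is any set with x_a ≥ 0, f̂_a ≥ 0 for all arcs a, and U_S is a nonempty smooth uncertainty set over the arc deviations. Then this problem equals min_{x∈X} Σ_{a∈A} δ̄_a f̂_a x_a, where δ̄_a is the coordinatewise maximum of U_S; i.e., the robust problem reduces to a deterministic shortest path problem with modified arc costs δ̄_a f̂_a. -/
import Mathlib


/-- Total weight of a walk given as a list of vertices. -/
def chainCost {n : ℕ} (γ : Fin n → Fin n → ℝ) : List (Fin n) → ℝ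
  | [] => 0
  | [_] => 0
  | a :: b :: l => γ a b + chainCost γ (b :: l)

/-- A list of vertices is a walk if consecutive vertices are adjacent. -/
def IsWalk {n : ℕ} (E : Fin n → Fin n → Prop) : List (Fin n) → Prop
  | [] => True
  | [_] => True
  | a :: b :: l => E a b ∧ IsWalk E (b :: l)

/-- `dist` is the shortest-path distance of the weighted graph `(E, γ)`:
for each pair `(i, j)`, `dist i j` is the minimum of the costs of walks from `i` to `j`
(in particular such a walk exists, i.e. the graph is connected). -/
def IsSPDist {n : ℕ} (E : Fin n → Fin n → Prop) (γ : Fin n → Fin n → ℝ)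
    (dist : Fin n → Fin n → ℝ) : Prop :=
  ∀ i j : Fin n, IsLeast {c : ℝ | ∃ l : List (Fin n), IsWalk E l ∧
    l.head? = some i ∧ l.getLast? = some j ∧ c = chainCost γ l} (dist i j)

/-- The smooth uncertainty set `U_S(δ̂, G)`. -/
def smoothSet {n : ℕ} (δhat : Fin n → ℝ) (E : Fin n → Fin n → Prop)
    (γ : Fin n → Fin n → ℝ) : Set (Fin n → ℝ) :=
  {δ | (∀ i, |δ i - δhat i| ≤ γ i i) ∧ ∀ i j, E i j → |δ i - δ j| ≤ γ i j}

lemma walk_bound {n : ℕ} {E : Fin n → Fin n → Prop} {γ : Fin n → Fin n → ℝ}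
    {δ : Fin n → ℝ} (hδ : ∀ i j, E i j → |δ i - δ j| ≤ γ i j) :
    ∀ l : List (Fin n), IsWalk E l → ∀ i j, l.head? = some i → l.getLast? = some j →
      δ j - δ i ≤ chainCost γ l
  | [] => by intro _ i j h; simp at h
  | [a] => by
      intro _ i j hh hl
      simp [List.head?, List.getLast?] at hh hl
      subst hh; subst hl; simp [chainCost]
  | a :: b :: l => by
      intro hw i j hh hl
      obtain ⟨hab, hw'⟩ := hw
      simp only [List.head?] at hh
      have hi' : i = a := (Option.some.inj hh).symm
      have hl' : (b :: l).getLast? = some j := by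
        rw [← hl]; simp [List.getLast?_cons_cons]
      have ih := walk_bound hδ (b :: l) hw' b j rfl hl'
      have h1 : δ b - δ a ≤ γ a b := by
        have := hδ a b hab
        have := abs_le.mp this
        linarith [this.1, this.2, abs_nonneg (δ a - δ b)]
      subst hi'
      simp only [chainCost]
      linarith

lemma walk_append {n : ℕ} {E : Fin n → Fin n → Prop} {γ : Fin n → Fin n → ℝ} :
    ∀ (l : List (Fin n)) (i j : Fin n), IsWalk E l → l.getLast? = some i → E i j →
      IsWalk E (l ++ [j]) ∧ chainCost γ (l ++ [j]) = chainCost γ l + γ i j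
  | [] => by intro i j _ h; simp at h
  | [a] => by
      intro i j _ hl hE
      simp [List.getLast?] at hl
      subst hl
      exact ⟨⟨hE, trivial⟩, by simp [chainCost]⟩
  | a :: b :: l => by
      intro i j hw hl hE
      obtain ⟨hab, hw'⟩ := hw
      have hl' : (b :: l).getLast? = some i := by
        rw [← hl]; simp [List.getLast?_cons_cons]
      obtain ⟨h1, h2⟩ := walk_append (γ := γ) (b :: l) i j hw' hl' hE
      constructor
      · exact ⟨hab, h1⟩
      · simp only [List.cons_append, chainCost] at h2 ⊢
        linarith

/-- the robust shortest path problem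
`min_{x ∈ X} max_{δ ∈ U_S} Σ_a δ_a f̂_a x_a` with `X ⊆ [0,1]^A`, `f̂ ≥ 0`, and nonempty
smooth uncertainty set `U_S` reduces to the deterministic problem with modified arc costs
`hi_a f̂_a`, where `hi` is the coordinatewise maximum of `U_S` (the inner maximum is
attained at `hi` for every `x ∈ X`). -/
theorem stmt18 {nA : ℕ} (E : Fin nA → Fin nA → Prop) (γ : Fin nA → Fin nA → ℝ)
    (hEsymm : ∀ i j, E i j → E j i) (hγsymm : ∀ i j, γ i j = γ j i)
    (hγnonneg : ∀ i j, 0 ≤ γ i j)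
    (dist : Fin nA → Fin nA → ℝ) (hSP : IsSPDist E γ dist) (δhat : Fin nA → ℝ)
    (hi : Fin nA → ℝ)
    (hhi : ∀ j, IsLeast {t : ℝ | ∃ k, t = δhat k + γ k k + dist k j} (hi j))
    (hne : (smoothSet δhat E γ).Nonempty)
    (fhat : Fin nA → ℝ) (hf : ∀ a, 0 ≤ fhat a)
    (Xset : Set (Fin nA → ℝ)) (hX : ∀ x ∈ Xset, ∀ a, 0 ≤ x a ∧ x a ≤ 1) :
    (∀ x ∈ Xset,
      IsGreatest {t : ℝ | ∃ δ ∈ smoothSet δhat E γ, t = ∑ a, δ a * fhat a * x a}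
        (∑ a, hi a * fhat a * x a)) ∧
    sInf {v : ℝ | ∃ x ∈ Xset,
        v = sSup {t : ℝ | ∃ δ ∈ smoothSet δhat E γ, t = ∑ a, δ a * fhat a * x a}} =
      sInf {v : ℝ | ∃ x ∈ Xset, v = ∑ a, hi a * fhat a * x a} := by
  -- δ ≤ hi pointwise for δ in the smooth set
  have key : ∀ δ ∈ smoothSet δhat E γ, ∀ j, δ j ≤ hi j := by
    intro δ hδ j
    obtain ⟨k, hk⟩ := (hhi j).1
    obtain ⟨l, hwl, hhd, hlst, hcost⟩ := (hSP k j).1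
    have h1 : δ j - δ k ≤ dist k j := by
      rw [hcost]; exact walk_bound hδ.2 l hwl k j hhd hlst
    have h2 : δ k - δhat k ≤ γ k k := (abs_le.mp (hδ.1 k)).2
    rw [hk]; linarith
  -- dist i i ≤ 0
  have hdist0 : ∀ i, dist i i ≤ 0 := fun i =>
    (hSP i i).2 ⟨[i], trivial, rfl, rfl, by simp [chainCost]⟩
  -- step: E i j → hi j ≤ hi i + γ i j
  have hstep : ∀ i j, E i j → hi j ≤ hi i + γ i j := by
    intro i j hE
    obtain ⟨k, hk⟩ := (hhi i).1
    obtain ⟨l, hwl, hhd, hlst, hcost⟩ := (hSP k i).1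
    obtain ⟨hw2, hc2⟩ := walk_append (γ := γ) l i j hwl hlst hE
    have hdkj : dist k j ≤ dist k i + γ i j := by
      refine (hSP k j).2 ⟨l ++ [j], hw2, ?_, ?_, by rw [hc2, hcost]⟩
      · cases l with
        | nil => simp at hhd
        | cons a t => simpa using hhd
      · simp
    have := (hhi j).2 ⟨k, rfl⟩
    rw [hk]; linarith
  -- hi belongs to the smooth set
  obtain ⟨δ0, hδ0⟩ := hne
  have hmem : hi ∈ smoothSet δhat E γ := by
    constructor
    · intro i
      rw [abs_le]
      constructor
      · have h1 := key δ0 hδ0 i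
        have h2 : δhat i - γ i i ≤ δ0 i := by
          have := (abs_le.mp (hδ0.1 i)).1; linarith
        linarith
      · have := (hhi i).2 ⟨i, rfl⟩
        have := hdist0 i
        linarith
    · intro i j hE
      rw [abs_sub_le_iff]
      have h1 := hstep j i (hEsymm i j hE)
      have h2 := hstep i j hE
      rw [hγsymm j i] at h1
      constructor <;> linarith
  have hgr : ∀ x ∈ Xset,
      IsGreatest {t : ℝ | ∃ δ ∈ smoothSet δhat E γ, t = ∑ a, δ a * fhat a * x a}
        (∑ a, hi a * fhat a * x a) := by
    intro x hx
    constructor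
    · exact ⟨hi, hmem, rfl⟩
    · rintro t ⟨δ, hδ, rfl⟩
      apply Finset.sum_le_sum
      intro a _
      have h1 : 0 ≤ fhat a * x a := mul_nonneg (hf a) (hX x hx a).1
      have h2 := key δ hδ a
      calc δ a * fhat a * x a = δ a * (fhat a * x a) := by ring
        _ ≤ hi a * (fhat a * x a) := mul_le_mul_of_nonneg_right h2 h1
        _ = hi a * fhat a * x a := by ring
  refine ⟨hgr, ?_⟩
  congr 1
  ext v
  constructor
  · rintro ⟨x, hx, rfl⟩
    exact ⟨x, hx, ((hgr x hx).csSup_eq)⟩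
  · rintro ⟨x, hx, rfl⟩
    exact ⟨x, hx, (hgr x hx).csSup_eq.symm⟩
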